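/- Let R be a commutative ring. The map sending an ideal I of R to the subtractive closure ⟨u_R(I)⟩_k in fgId(R) of the ideal of fgId(R) generated by {R·a : a ∈ I}, and the map sending a subtractive ideal Λ of fgId(R) to u_R⁻¹(Λ) = {a ∈ R : R·a ∈ Λ}, are mutually inverse, inclusion-preserving bijections between the set Id(R) of ideals of R and the set Id_k(fgId(R)) of subtractive ideals of the semiring fgId(R). -/

import Mathlib

/-- The type of finitely generated ideals of a commutative ring `R`. -/
def FGIdeal (R : Type*) [CommRing R] : Type _ := {I : Ideal R // I.FG}

namespace FGIdeal

variable {R : Type*} [CommRing R]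

instance : Zero (FGIdeal R) := ⟨⟨⊥, Submodule.fg_bot⟩⟩

instance : One (FGIdeal R) := ⟨⟨1, ⟨{1}, by simp [Ideal.one_eq_top]⟩⟩⟩

instance : Add (FGIdeal R) :=
  ⟨fun I J => ⟨I.1 + J.1, by rw [Submodule.add_eq_sup]; exact Submodule.FG.sup I.2 J.2⟩⟩

instance : Mul (FGIdeal R) := ⟨fun I J => ⟨I.1 * J.1, Submodule.FG.mul I.2 J.2⟩⟩

instance : SMul ℕ (FGIdeal R) :=
  ⟨fun n I => ⟨n • I.1, by
    induction n with
    | zero => simpa using (show Ideal.FG (⊥ : Ideal R) from Submodule.fg_bot)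
    | succ n ih => rw [succ_nsmul, Submodule.add_eq_sup]; exact Submodule.FG.sup ih I.2⟩⟩

instance : Pow (FGIdeal R) ℕ := ⟨fun I n => ⟨I.1 ^ n, Submodule.FG.pow I.2 n⟩⟩

instance : NatCast (FGIdeal R) :=
  ⟨fun n => ⟨(n : Ideal R), by
    induction n with
    | zero => simpa using (show Ideal.FG (⊥ : Ideal R) from Submodule.fg_bot)
    | succ n ih =>
        rw [Nat.cast_succ, Submodule.add_eq_sup]
        exact Submodule.FG.sup ih ⟨{1}, by simp [Ideal.one_eq_top]⟩⟩⟩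

instance : CommSemiring (FGIdeal R) :=
  Subtype.val_injective.commSemiring (fun I : FGIdeal R => I.1) rfl rfl
    (fun _ _ => rfl) (fun _ _ => rfl) (fun _ _ => rfl) (fun _ _ => rfl) (fun _ => rfl)

end FGIdeal

variable {R : Type*} [CommRing R]

/-- The universal integral seminorm `u_R : R → fgId(R)`, `a ↦ R·a`. -/
def uRfg (a : R) : FGIdeal R := ⟨Ideal.span {a}, Submodule.fg_span_singleton a⟩
section SemiringIdeals

variable {S : Type*} [CommSemiring S]

/-- A subset of a commutative semiring which is an ideal: it contains `0` and is closed
under addition and under multiplication by arbitrary elements. -/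
def IsIdealSet (I : Set S) : Prop :=
  (0 : S) ∈ I ∧ (∀ a ∈ I, ∀ b ∈ I, a + b ∈ I) ∧ ∀ (c : S), ∀ a ∈ I, c * a ∈ I

/-- A subset `I` is subtractive if `a + b ∈ I` and `a ∈ I` imply `b ∈ I`. -/
def IsSubtractiveSet (I : Set S) : Prop :=
  ∀ a b : S, a + b ∈ I → a ∈ I → b ∈ I

/-- A `k`-ideal (subtractive ideal) of a commutative semiring. -/
def IsKIdeal (I : Set S) : Prop := IsIdealSet I ∧ IsSubtractiveSet I

/-- The smallest subtractive ideal containing a subset `X`. -/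
def kClosure (X : Set S) : Set S := ⋂₀ {J : Set S | IsKIdeal J ∧ X ⊆ J}

/-- The smallest ideal containing a subset `X`. -/
def idealGen (X : Set S) : Set S := ⋂₀ {J : Set S | IsIdealSet J ∧ X ⊆ J}

/-- An ideal of a commutative semiring is prime when its complement is multiplicatively
closed: `1 ∉ I` and `a * b ∈ I` implies `a ∈ I` or `b ∈ I`. -/
def IsPrimeSet (I : Set S) : Prop :=
  (1 : S) ∉ I ∧ ∀ a b : S, a * b ∈ I → a ∈ I ∨ b ∈ I

end SemiringIdeals

/-- The map `Id(R) → Id_k(fgId(R))`, `I ↦ ⟨u_R(I)⟩_k`. -/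
def uRtilde {R : Type*} [CommRing R] (I : Ideal R) : Set (FGIdeal R) :=
  kClosure (uRfg '' (I : Set R))

/-! In `fgId(R)` the relation `K + J = K` means `J ≤ K`, so subtractive sets are downward closed;
and every finitely generated ideal is a finite sum of principal ones. Hence a subtractive ideal
`Λ` consists exactly of the `J` with `J ⊆ u_R⁻¹(Λ)`, and `⟨u_R(I)⟩_k = {J | J ≤ I}`. -/

section KClosure

variable {S : Type*} [CommSemiring S]

lemma isKIdeal_kClosure (X : Set S) : IsKIdeal (kClosure X) :=
  ⟨⟨fun _ hJ => hJ.1.1.1,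
    fun a ha b hb J hJ => hJ.1.1.2.1 a (ha J hJ) b (hb J hJ),
    fun c a ha J hJ => hJ.1.1.2.2 c a (ha J hJ)⟩,
   fun a b hab ha J hJ => hJ.1.2 a b (hab J hJ) (ha J hJ)⟩

lemma subset_kClosure (X : Set S) : X ⊆ kClosure X :=
  fun _ ha _ hJ => hJ.2 ha

lemma kClosure_subset {X J : Set S} (hJ : IsKIdeal J) (hX : X ⊆ J) : kClosure X ⊆ J :=
  fun _ ha => ha J ⟨hJ, hX⟩

end KClosure

namespace FGIdeal

lemma add_eq_left_of_val_le {J K : FGIdeal R} (h : J.1 ≤ K.1) : K + J = K :=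
  Subtype.ext (sup_eq_left.mpr h)

@[elab_as_elim]
lemma induction_on {motive : FGIdeal R → Prop} (J : FGIdeal R)
    (principal : ∀ a, motive (uRfg a)) (add : ∀ I K, motive I → motive K → motive (I + K)) :
    motive J :=
  Submodule.fg_induction (motive := fun N hN => motive ⟨N, hN⟩) principal
    (fun N₁ N₂ hN₁ hN₂ => add ⟨N₁, hN₁⟩ ⟨N₂, hN₂⟩) J.1 J.2

end FGIdeal

section Correspondence

variable {Λ : Set (FGIdeal R)}

lemma IsSubtractiveSet.mem_of_val_le (hΛ : IsSubtractiveSet Λ) {J K : FGIdeal R}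
    (hJK : J.1 ≤ K.1) (hK : K ∈ Λ) : J ∈ Λ :=
  hΛ K J (by rwa [FGIdeal.add_eq_left_of_val_le hJK]) hK

lemma IsSubtractiveSet.uRfg_mem (hΛ : IsSubtractiveSet Λ) {J : FGIdeal R} (hJ : J ∈ Λ)
    {a : R} (ha : a ∈ J.1) : uRfg a ∈ Λ :=
  hΛ.mem_of_val_le ((Ideal.span_singleton_le_iff_mem J.1).mpr ha) hJ

lemma IsIdealSet.mem_of_forall_uRfg_mem (hΛ : IsIdealSet Λ) (J : FGIdeal R)
    (hJ : ∀ a ∈ J.1, uRfg a ∈ Λ) : J ∈ Λ := by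
  induction J using FGIdeal.induction_on with
  | principal a => exact hJ a (Ideal.mem_span_singleton_self a)
  | add I K hI hK =>
    exact hΛ.2.1 I (hI fun a ha => hJ a (Ideal.mem_sup_left ha))
      K (hK fun a ha => hJ a (Ideal.mem_sup_right ha))

lemma IsKIdeal.mem_iff_forall_uRfg_mem (hΛ : IsKIdeal Λ) {J : FGIdeal R} :
    J ∈ Λ ↔ ∀ a ∈ J.1, uRfg a ∈ Λ :=
  ⟨fun hJ _ ha => hΛ.2.uRfg_mem hJ ha, hΛ.1.mem_of_forall_uRfg_mem J⟩

lemma isKIdeal_setOf_val_le (I : Ideal R) : IsKIdeal {J : FGIdeal R | J.1 ≤ I} :=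
  ⟨⟨(bot_le : (0 : FGIdeal R).1 ≤ I),
    fun J (hJ : J.1 ≤ I) K (hK : K.1 ≤ I) => (sup_le hJ hK : J.1 ⊔ K.1 ≤ I),
    fun c J (hJ : J.1 ≤ I) => (Ideal.mul_le_right : c.1 * J.1 ≤ J.1).trans hJ⟩,
   fun J K (hJK : J.1 ⊔ K.1 ≤ I) _ => le_sup_right.trans hJK⟩

lemma uRtilde_eq_setOf_val_le (I : Ideal R) : uRtilde I = {J : FGIdeal R | J.1 ≤ I} := by
  refine (kClosure_subset (isKIdeal_setOf_val_le I) ?_).antisymm fun J hJ => ?_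
  · rintro _ ⟨a, ha, rfl⟩
    exact (Ideal.span_singleton_le_iff_mem I).mpr ha
  · exact (isKIdeal_kClosure _).1.mem_of_forall_uRfg_mem J fun a ha =>
      subset_kClosure _ ⟨a, hJ ha, rfl⟩

lemma uRfg_mem_uRtilde_iff (I : Ideal R) (a : R) : uRfg a ∈ uRtilde I ↔ a ∈ I := by
  rw [uRtilde_eq_setOf_val_le]
  exact Ideal.span_singleton_le_iff_mem I

def IsKIdeal.preimageIdeal (hΛ : IsKIdeal Λ) : Ideal R where
  carrier := uRfg ⁻¹' Λ
  zero_mem' := hΛ.2.uRfg_mem hΛ.1.1 (zero_mem _)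
  add_mem' {a b} ha hb := hΛ.2.uRfg_mem (hΛ.1.2.1 _ ha _ hb)
    (add_mem (Ideal.mem_sup_left (Ideal.mem_span_singleton_self a))
      (Ideal.mem_sup_right (Ideal.mem_span_singleton_self b)))
  smul_mem' c a ha := hΛ.2.uRfg_mem ha (Ideal.mul_mem_left _ c (Ideal.mem_span_singleton_self a))

lemma IsKIdeal.uRtilde_preimageIdeal (hΛ : IsKIdeal Λ) : uRtilde hΛ.preimageIdeal = Λ := by
  ext J
  rw [uRtilde_eq_setOf_val_le, Set.mem_ofPred_eq, hΛ.mem_iff_forall_uRfg_mem]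
  rfl

end Correspondence

/-- `I ↦ ⟨u_R(I)⟩_k` and `Λ ↦ u_R⁻¹(Λ)` are mutually inverse,
inclusion-preserving bijections between the ideals of `R` and the subtractive ideals of
the semiring `fgId(R)`. -/
theorem correspondence_ideals_subtractive_ideals
    (R : Type*) [CommRing R] :
    (∀ I : Ideal R, IsKIdeal (uRtilde I)) ∧
    (∀ I : Ideal R, uRfg ⁻¹' (uRtilde I) = (I : Set R)) ∧
    (∀ Λ : Set (FGIdeal R), IsKIdeal Λ →
      ∃ I : Ideal R, (I : Set R) = uRfg ⁻¹' Λ ∧ uRtilde I = Λ) ∧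
    (∀ I J : Ideal R, I ≤ J → uRtilde I ⊆ uRtilde J) ∧
    (∀ Λ Λ' : Set (FGIdeal R), Λ ⊆ Λ' → (uRfg ⁻¹' Λ : Set R) ⊆ uRfg ⁻¹' Λ') := by
  refine ⟨fun I => ?_, fun I => Set.ext (uRfg_mem_uRtilde_iff I),
    fun Λ hΛ => ⟨hΛ.preimageIdeal, rfl, hΛ.uRtilde_preimageIdeal⟩, fun I J hIJ => ?_,
    fun _ _ h => Set.preimage_mono h⟩
  · rw [uRtilde_eq_setOf_val_le]
    exact isKIdeal_setOf_val_le I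
  · rw [uRtilde_eq_setOf_val_le, uRtilde_eq_setOf_val_le]
    exact fun K hK => hK.trans hIJ
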